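/- arXiv:2009.07903 — 2 statements merged into one kernel-verified Lean document; each statement's English description precedes it below -/
import Mathlib

section
/- Let E : ℝ × ℝᴺ × ℝᴺ → Matrix (Fin N) (Fin N) ℝ, (c, k, ω) ↦ E(c, k, ω), be continuously differentiable with E(c, k, ω) symmetric for all arguments, and let c : ℝᴺ × ℝᴺ → ℝ be differentiable with det E(c(k, ω), k, ω) = 0 for all (k, ω). Fix (k₀, ω₀), set c₀ = c(k₀, ω₀) and E₀ = E(c₀, k₀, ω₀). Suppose the kernel of E₀ is one-dimensional, spanned by ζ ≠ 0, let μ be the product of the nonzero eigenvalues of E₀, and suppose trace(adj(E₀)·∂_c E₀) ≠ 0. Then ∇_k c(k₀, ω₀)·ζ − c₀ ∇_ω c(k₀, ω₀)·ζ = −(μ / (‖ζ‖² · trace(adj(E₀)·∂_c E₀))) · ζᵀ (D^k_ζ E − c₀ D^ω_ζ E) ζ, where D^k_ζ E and D^ω_ζ E denote the directional derivatives of E(c₀, ·, ·) at (k₀, ω₀) in the k-variables and ω-variables respectively, in the direction ζ. -/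
open Matrix BigOperators

/-!
Differentiate `det E(c(k, ω), k, ω) = 0` at `(k₀, ω₀)` in the direction `(ζ, -c₀ ζ)`. By Jacobi's
formula, `trace (adj E₀ * ((∇_k c ⬝ ζ - c₀ ∇_ω c ⬝ ζ) • ∂_c E + D^k_ζ E - c₀ D^ω_ζ E)) = 0`.
As `E₀` is symmetric with kernel spanned by `ζ`, the vanishing of `E₀ * adj E₀` and `adj E₀ * E₀`
forces `adj E₀ = α • ζ ζᵀ`. In an eigenbasis, `trace (adj E₀)` is the sum over `i` of the products
of all eigenvalues but the `i`-th; only the term omitting the zero eigenvalue survives, so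
`α ‖ζ‖² = μ`. Hence `trace (adj E₀ * M) = μ / ‖ζ‖² * ζᵀ M ζ`, and the identity is solved for the
directional derivative of `c`.
-/

section PartialDerivatives

variable {𝕜 E F G : Type*} [NontriviallyNormedField 𝕜] [NormedAddCommGroup E] [NormedSpace 𝕜 E]
  [NormedAddCommGroup F] [NormedSpace 𝕜 F] [NormedAddCommGroup G] [NormedSpace 𝕜 G]

theorem fderiv_apply_prodMk {f : E × F → G} {x : E} {y : F} (hf : DifferentiableAt 𝕜 f (x, y))
    (u : E) (v : F) :
    fderiv 𝕜 f (x, y) (u, v) =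
      fderiv 𝕜 (fun x' => f (x', y)) x u + fderiv 𝕜 (fun y' => f (x, y')) y v := by
  have hx : HasFDerivAt (fun x' => f (x', y)) ((fderiv 𝕜 f (x, y)).comp (.inl 𝕜 E F)) x :=
    hf.hasFDerivAt.comp x (hasFDerivAt_prodMk_left x y)
  have hy : HasFDerivAt (fun y' => f (x, y')) ((fderiv 𝕜 f (x, y)).comp (.inr 𝕜 E F)) y :=
    hf.hasFDerivAt.comp y (hasFDerivAt_prodMk_right x y)
  simp [hx.fderiv, hy.fderiv, ← map_add]

theorem fderiv_apply_prodMk₃ {f : 𝕜 × E × F → G} {s : 𝕜} {x : E} {y : F}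
    (hf : DifferentiableAt 𝕜 f (s, x, y)) (r : 𝕜) (u : E) (v : F) :
    fderiv 𝕜 f (s, x, y) (r, u, v) = r • deriv (fun s' => f (s', x, y)) s +
      fderiv 𝕜 (fun x' => f (s, x', y)) x u + fderiv 𝕜 (fun y' => f (s, x, y')) y v := by
  have hxy : DifferentiableAt 𝕜 (fun q : E × F => f (s, q)) (x, y) :=
    hf.comp (x, y) (hasFDerivAt_prodMk_right s (x, y)).differentiableAt
  rw [fderiv_apply_prodMk hf, fderiv_apply_prodMk hxy, fderiv_eq_smul_deriv, add_assoc]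

theorem hasDerivAt_apply_graph_add_smul {g : 𝕜 × E × F → G} {h : E × F → 𝕜} {x : E} {y : F}
    (hg : DifferentiableAt 𝕜 g (h (x, y), x, y)) (hh : DifferentiableAt 𝕜 h (x, y))
    (u : E) (v : F) :
    HasDerivAt (fun t : 𝕜 => g (h (x + t • u, y + t • v), x + t • u, y + t • v))
      (fderiv 𝕜 h (x, y) (u, v) • deriv (fun s => g (s, x, y)) (h (x, y)) +
        fderiv 𝕜 (fun x' => g (h (x, y), x', y)) x u +
        fderiv 𝕜 (fun y' => g (h (x, y), x, y')) y v) 0 := by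
  have hline : HasDerivAt (fun t : 𝕜 => (x + t • u, y + t • v)) (u, v) 0 := by
    simpa using (((hasDerivAt_id (0 : 𝕜)).smul_const u).const_add x).prodMk
      (((hasDerivAt_id (0 : 𝕜)).smul_const v).const_add y)
  have hh' := hh.hasFDerivAt.comp_hasDerivAt_of_eq 0 hline (by simp)
  rw [← fderiv_apply_prodMk₃ hg]
  exact hg.hasFDerivAt.comp_hasDerivAt_of_eq 0 (hh'.prodMk hline) (by simp)

end PartialDerivatives

theorem Finset.sum_prod_erase_eq_prod_ne_zero {ι R : Type*} [Fintype ι] [DecidableEq ι]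
    [CommSemiring R] [DecidableEq R] (f : ι → R) {i₀ : ι} (h : ∀ i, f i = 0 ↔ i = i₀) :
    ∑ i, ∏ j ∈ univ.erase i, f j = ∏ j with f j ≠ 0, f j := by
  have herase : univ.erase i₀ = univ.filter (f · ≠ 0) := by
    ext j; simp [h]
  rw [Fintype.sum_eq_single i₀ fun i hi => prod_eq_zero (mem_erase.mpr ⟨hi.symm, mem_univ i₀⟩)
    ((h i₀).mpr rfl), herase]

namespace Matrix

section Jacobi

variable {n : Type*} [Fintype n] [DecidableEq n]

theorem det_updateCol_eq_sum_perm {R : Type*} [CommRing R] (A : Matrix n n R) (i : n)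
    (v : n → R) :
    (A.updateCol i v).det = ∑ σ : Equiv.Perm n,
      Equiv.Perm.sign σ • ((∏ j ∈ Finset.univ.erase i, A (σ j) j) * v (σ i)) := by
  rw [det_apply]
  refine Finset.sum_congr rfl fun σ _ => ?_
  rw [← Finset.mul_prod_erase _ _ (Finset.mem_univ i), updateCol_self, mul_comm,
    Finset.prod_congr rfl fun j hj => updateCol_ne (Finset.ne_of_mem_erase hj)]

theorem trace_adjugate_mul_eq_sum_det_updateCol {R : Type*} [CommRing R] (A H : Matrix n n R) :
    (A.adjugate * H).trace = ∑ i, (A.updateCol i (Hᵀ i)).det := by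
  refine Finset.sum_congr rfl fun i _ => ?_
  rw [← cramer_apply, cramer_eq_adjugate_mulVec]
  rfl

theorem hasDerivAt_det {𝕜 : Type*} [NontriviallyNormedField 𝕜] {f : 𝕜 → Matrix n n 𝕜}
    {f' : Matrix n n 𝕜} {t₀ : 𝕜} (hf : ∀ i j, HasDerivAt (fun t => f t i j) (f' i j) t₀) :
    HasDerivAt (fun t => (f t).det) ((f t₀).adjugate * f').trace t₀ := by
  have hσ (σ : Equiv.Perm n) : HasDerivAt (fun t => Equiv.Perm.sign σ • ∏ i, f t (σ i) i)
      (Equiv.Perm.sign σ • ∑ i, (∏ j ∈ Finset.univ.erase i, f t₀ (σ j) j) * f' (σ i) i) t₀ :=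
    (HasDerivAt.fun_finsetProd fun i _ => hf (σ i) i).const_smul _
  simp only [det_apply]
  refine (HasDerivAt.fun_sum fun σ _ => hσ σ).congr_deriv ?_
  simp only [trace_adjugate_mul_eq_sum_det_updateCol, det_updateCol_eq_sum_perm,
    Finset.smul_sum, transpose_apply]
  exact Finset.sum_comm

theorem trace_adjugate_mul_eq_zero_of_det_eq_zero {𝕜 : Type*} [NontriviallyNormedField 𝕜]
    {f : 𝕜 → Matrix n n 𝕜} {f' : Matrix n n 𝕜} {t₀ : 𝕜}
    (hf : ∀ i j, HasDerivAt (fun t => f t i j) (f' i j) t₀) (hdet : ∀ t, (f t).det = 0) :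
    ((f t₀).adjugate * f').trace = 0 :=
  (hasDerivAt_det hf).unique <| by simpa only [hdet] using hasDerivAt_const t₀ (0 : 𝕜)

end Jacobi

theorem trace_vecMulVec_mul {n R : Type*} [Fintype n] [CommSemiring R] (u v : n → R)
    (M : Matrix n n R) :
    (vecMulVec u v * M).trace = v ⬝ᵥ M *ᵥ u := by
  rw [vecMulVec_mul, trace_vecMulVec, dotProduct_comm, dotProduct_mulVec]

theorem exists_eq_vecMulVec_of_mul_eq_zero {n m K : Type*} [Fintype n] [Field K]
    {A : Matrix n n K} {B : Matrix n m K} {ζ : n → K}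
    (hker : LinearMap.ker A.mulVecLin = Submodule.span K {ζ}) (hAB : A * B = 0) :
    ∃ w, B = vecMulVec ζ w := by
  have hcol (j : m) : ∃ t : K, t • ζ = Bᵀ j := by
    rw [← Submodule.mem_span_singleton, ← hker, LinearMap.mem_ker, mulVecLin_apply]
    ext i
    simpa [mulVec, dotProduct, mul_apply] using congrFun (congrFun hAB i) j
  choose w hw using hcol
  refine ⟨w, ext fun i j => ?_⟩
  simpa [vecMulVec_apply, mul_comm] using (congrFun (hw j) i).symm

theorem IsSymm.exists_adjugate_eq_smul_vecMulVec {n K : Type*} [Fintype n] [DecidableEq n]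
    [Field K] {A : Matrix n n K} (hA : A.IsSymm) {ζ : n → K} (hζ : ζ ≠ 0)
    (hker : LinearMap.ker A.mulVecLin = Submodule.span K {ζ}) :
    ∃ α : K, A.adjugate = α • vecMulVec ζ ζ := by
  have hAζ : A *ᵥ ζ = 0 := by
    simpa using (hker.ge (Submodule.mem_span_singleton_self ζ) : ζ ∈ LinearMap.ker A.mulVecLin)
  have hdet : A.det = 0 := exists_mulVec_eq_zero_iff.mp ⟨ζ, hζ, hAζ⟩
  obtain ⟨w, hw⟩ :=
    exists_eq_vecMulVec_of_mul_eq_zero (B := A.adjugate) hker (by simp [mul_adjugate, hdet])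
  have hAw : A *ᵥ w = 0 := by
    have : vecMulVec ζ (w ᵥ* A) = 0 := by
      rw [← vecMulVec_mul, ← hw, adjugate_mul, hdet, zero_smul]
    rw [← hA.eq, mulVec_transpose]
    simpa [hζ] using this
  obtain ⟨α, rfl⟩ : ∃ α : K, α • ζ = w := by
    rw [← Submodule.mem_span_singleton, ← hker, LinearMap.mem_ker, mulVecLin_apply, hAw]
  exact ⟨α, by rw [hw, vecMulVec_smul]⟩

section Hermitian

variable {n 𝕜 : Type*} [Fintype n] [DecidableEq n] [RCLike 𝕜] {A : Matrix n n 𝕜}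

theorem IsHermitian.trace_adjugate (hA : A.IsHermitian) :
    A.adjugate.trace = ∑ i, ∏ j ∈ Finset.univ.erase i, (hA.eigenvalues j : 𝕜) := by
  set U : Matrix n n 𝕜 := (hA.eigenvectorUnitary : Matrix n n 𝕜)
  have hUU : U.adjugate * (star U).adjugate = 1 := by
    rw [← adjugate_mul_distrib, Unitary.star_mul_self_of_mem hA.eigenvectorUnitary.2, adjugate_one]
  conv_lhs => rw [hA.spectral_theorem, Unitary.conjStarAlgAut_apply, adjugate_mul_distrib,
    adjugate_mul_distrib, ← mul_assoc, trace_mul_cycle, hUU, one_mul, adjugate_diagonal,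
    trace_diagonal]
  rfl

theorem IsHermitian.exists_eigenvalues_eq_zero_iff (hA : A.IsHermitian)
    (hker : Module.finrank 𝕜 (LinearMap.ker A.mulVecLin) = 1) :
    ∃ i₀, ∀ i, hA.eigenvalues i = 0 ↔ i = i₀ := by
  have hcard : Fintype.card {i // hA.eigenvalues i ≠ 0} + 1 = Fintype.card n := by
    rw [← hA.rank_eq_card_non_zero_eigs, ← hker, rank, LinearMap.finrank_range_add_finrank_ker,
      Module.finrank_fintype_fun_eq_card]
  have hcard_zero : Fintype.card {i // hA.eigenvalues i = 0} = 1 := by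
    have hcompl := Fintype.card_subtype_compl (fun i => hA.eigenvalues i = 0)
    have hle := Fintype.card_subtype_le (fun i => hA.eigenvalues i = 0)
    simp only [ne_eq] at hcard
    omega
  obtain ⟨⟨i₀, hi₀⟩, h⟩ := Fintype.card_eq_one_iff.mp hcard_zero
  exact ⟨i₀, fun i => ⟨fun hi => congrArg Subtype.val (h ⟨i, hi⟩), fun hi => hi ▸ hi₀⟩⟩

end Hermitian

theorem IsHermitian.adjugate_eq_smul_vecMulVec {n : Type*} [Fintype n] [DecidableEq n]
    {A : Matrix n n ℝ} (hA : A.IsHermitian) {ζ : n → ℝ} (hζ : ζ ≠ 0)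
    (hker : LinearMap.ker A.mulVecLin = Submodule.span ℝ {ζ}) :
    A.adjugate =
      ((∏ i with hA.eigenvalues i ≠ 0, hA.eigenvalues i) / (ζ ⬝ᵥ ζ)) • vecMulVec ζ ζ := by
  obtain ⟨α, hα⟩ := (isHermitian_iff_isSymm.mp hA).exists_adjugate_eq_smul_vecMulVec hζ hker
  obtain ⟨i₀, hi₀⟩ := hA.exists_eigenvalues_eq_zero_iff (by rw [hker, finrank_span_singleton hζ])
  have htrace : α * (ζ ⬝ᵥ ζ) = ∏ i with hA.eigenvalues i ≠ 0, hA.eigenvalues i := by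
    rw [← Finset.sum_prod_erase_eq_prod_ne_zero _ hi₀, ← trace_vecMulVec, ← smul_eq_mul,
      ← trace_smul, ← hα, hA.trace_adjugate]
    rfl
  have hζζ : ζ ⬝ᵥ ζ ≠ 0 := dotProduct_self_eq_zero.not.mpr hζ
  rw [hα, ← htrace, mul_div_cancel_right₀ _ hζζ]

end Matrix

/-- The genuine-nonlinearity quantity for the Whitham modulation equations: for a
symmetric pencil `E(c, k, ω)` and an implicitly defined characteristic speed
`c(k, ω)` with `det E(c(k,ω), k, ω) = 0`, if at `(k₀, ω₀)` the kernel of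
`E₀ = E(c₀, k₀, ω₀)` is spanned by `ζ ≠ 0`, `μ` is the product of the nonzero
eigenvalues of `E₀` and `trace(adj(E₀) ∂_c E₀) ≠ 0`, then
`∇_k c ⋅ ζ − c₀ ∇_ω c ⋅ ζ = −(μ/(‖ζ‖² trace(adj(E₀) ∂_c E₀))) ζᵀ(D^k_ζ E − c₀ D^ω_ζ E)ζ`. -/
theorem genuine_nonlinearity_formula
    (N : ℕ)
    (E : ℝ → (Fin N → ℝ) → (Fin N → ℝ) → Matrix (Fin N) (Fin N) ℝ)
    (hE : ∀ i j, ContDiff ℝ 1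
      (fun p : ℝ × (Fin N → ℝ) × (Fin N → ℝ) => E p.1 p.2.1 p.2.2 i j))
    (hsym : ∀ c k ω, (E c k ω).IsHermitian)
    (c : (Fin N → ℝ) → (Fin N → ℝ) → ℝ)
    (hc : Differentiable ℝ (fun p : (Fin N → ℝ) × (Fin N → ℝ) => c p.1 p.2))
    (hdet : ∀ k ω, (E (c k ω) k ω).det = 0)
    (k₀ ω₀ : Fin N → ℝ) (c₀ : ℝ) (hc₀ : c₀ = c k₀ ω₀)
    (E₀ : Matrix (Fin N) (Fin N) ℝ) (hE₀ : E₀ = E c₀ k₀ ω₀)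
    (ζ : Fin N → ℝ) (hζ : ζ ≠ 0)
    (hker : LinearMap.ker E₀.mulVecLin = Submodule.span ℝ {ζ})
    (μ : ℝ)
    (hμ : μ = ∏ i ∈ Finset.univ.filter
      (fun i => (hsym c₀ k₀ ω₀).eigenvalues i ≠ 0), (hsym c₀ k₀ ω₀).eigenvalues i)
    (Ec Dk Dω : Matrix (Fin N) (Fin N) ℝ)
    (hEc : ∀ i j, Ec i j = deriv (fun c' => E c' k₀ ω₀ i j) c₀)
    (hDk : ∀ i j, Dk i j = fderiv ℝ (fun k => E c₀ k ω₀ i j) k₀ ζ)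
    (hDω : ∀ i j, Dω i j = fderiv ℝ (fun ω => E c₀ k₀ ω i j) ω₀ ζ)
    (htr : (E₀.adjugate * Ec).trace ≠ 0) :
    fderiv ℝ (fun k => c k ω₀) k₀ ζ - c₀ * fderiv ℝ (fun ω => c k₀ ω) ω₀ ζ
      = -(μ / ((ζ ⬝ᵥ ζ) * (E₀.adjugate * Ec).trace))
          * (ζ ⬝ᵥ (Dk - c₀ • Dω).mulVec ζ) := by
  subst hE₀
  set D := Dk - c₀ • Dω
  set a := fderiv ℝ (fun k => c k ω₀) k₀ ζ
  set b := fderiv ℝ (fun ω => c k₀ ω) ω₀ ζ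
  have hcζ : fderiv ℝ (fun q : (Fin N → ℝ) × (Fin N → ℝ) => c q.1 q.2) (k₀, ω₀) (ζ, -(c₀ • ζ))
      = a - c₀ * b := by
    rw [fderiv_apply_prodMk (hc _), map_neg, map_smul, smul_eq_mul, sub_eq_add_neg]
  have hEζ (i j : Fin N) : HasDerivAt
      (fun t : ℝ => E (c (k₀ + t • ζ) (ω₀ + t • -(c₀ • ζ))) (k₀ + t • ζ) (ω₀ + t • -(c₀ • ζ)) i j)
      (((a - c₀ * b) • Ec + D) i j) 0 := by
    have hEij := (hE i j).differentiable one_ne_zero (c₀, k₀, ω₀)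
    rw [hc₀] at hEij
    refine (hasDerivAt_apply_graph_add_smul hEij (hc _) ζ (-(c₀ • ζ))).congr_deriv ?_
    simp only [hcζ, ← hc₀, D, Matrix.add_apply, Matrix.sub_apply, Matrix.smul_apply, hEc, hDk, hDω,
      map_neg, map_smul, smul_eq_mul]
    ring
  have hjacobi := trace_adjugate_mul_eq_zero_of_det_eq_zero hEζ fun t => hdet _ _
  have htrace : ((E c₀ k₀ ω₀).adjugate * D).trace = μ / (ζ ⬝ᵥ ζ) * (ζ ⬝ᵥ D *ᵥ ζ) := by
    rw [(hsym c₀ k₀ ω₀).adjugate_eq_smul_vecMulVec hζ hker, ← hμ, smul_mul, trace_smul,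
      trace_vecMulVec_mul, smul_eq_mul]
  have hζζ : ζ ⬝ᵥ ζ ≠ 0 := dotProduct_self_eq_zero.not.mpr hζ
  simp only [zero_smul, add_zero, ← hc₀] at hjacobi
  rw [mul_add, Matrix.mul_smul, trace_add, trace_smul, htrace, smul_eq_mul] at hjacobi
  field_simp at hjacobi ⊢
  linear_combination hjacobi
end

section
/- Let α₁, α₂, β ∈ ℝ with β ≠ 0, define 𝒜(k, ω) = (ω + α₁k² + α₂k³)/(2β) and ℬ(k, ω) = (α₁ k + (3/2) α₂ k²)(ω + α₁k² + α₂k³)/β, and fix (k, ω) with h := α₁ + 3α₂k ≠ 0, ρ := (ω + α₁k² + α₂k³)/β > 0 and the degeneracy condition α₂² ρ + 2β⁻¹ h³ = 0. Set c := 2α₁k + 3α₂k² + α₂βρ/h. Then (i) c satisfies the characteristic equation ∂_ω𝒜·c² − (∂_k𝒜 + ∂_ωℬ)·c + ∂_kℬ = 0 at (k, ω), and (ii) 2c·∂_ω𝒜 − ∂_k𝒜 − ∂_ωℬ = α₂ρ/h. -/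
/-!
For a plane wave `A₀ e^{i(kx+ωt)}` of an NLS equation with linear dispersion `g`, the wave action
and its flux are `𝒜 = (ω + g k)/(2β)` and `ℬ = g'(k) (ω + g k)/(2β)`, and the characteristic
quadratic collapses to `((c - g' k)² + g''(k) (ω + g k)) / (2β)`. For the cubic dispersion
`g k = α₁k² + α₂k³` one has `g'' = 2h` and `ω + g k = βρ`, so the speed `c = g' k + α₂βρ/h` is a
root exactly when `(α₂βρ/h)² + 2hβρ = 0`, which is the degeneracy condition multiplied by
`β²ρ/h²`. The modulation coefficient `2c∂_ω𝒜 − ∂_k𝒜 − ∂_ωℬ` is `(c - g' k)/β = α₂ρ/h`.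
-/

section PlaneWave

noncomputable def waveAction (β : ℝ) (g : ℝ → ℝ) (k ω : ℝ) : ℝ := (ω + g k) / (2 * β)

noncomputable def waveActionFlux (β : ℝ) (g g' : ℝ → ℝ) (k ω : ℝ) : ℝ := g' k * (ω + g k) / (2 * β)

variable {β k ω g'' : ℝ} {g g' : ℝ → ℝ}

theorem deriv_waveAction_omega : deriv (fun ω' => waveAction β g k ω') ω = 1 / (2 * β) := by
  simp [waveAction, div_eq_mul_inv]

theorem deriv_waveAction_wavenumber (hg : HasDerivAt g (g' k) k) :
    deriv (fun k' => waveAction β g k' ω) k = g' k / (2 * β) :=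
  ((hg.const_add ω).div_const (2 * β)).deriv

theorem deriv_waveActionFlux_omega :
    deriv (fun ω' => waveActionFlux β g g' k ω') ω = g' k / (2 * β) := by
  simp [waveActionFlux, div_eq_mul_inv]

theorem deriv_waveActionFlux_wavenumber (hg : HasDerivAt g (g' k) k)
    (hg' : HasDerivAt g' g'' k) :
    deriv (fun k' => waveActionFlux β g g' k' ω) k
      = (g'' * (ω + g k) + g' k ^ 2) / (2 * β) := by
  refine (((hg'.mul (hg.const_add ω)).div_const (2 * β)).congr_deriv ?_).deriv
  ring

theorem characteristic_quadratic_eq (hg : HasDerivAt g (g' k) k) (hg' : HasDerivAt g' g'' k)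
    (c : ℝ) :
    deriv (fun ω' => waveAction β g k ω') ω * c ^ 2
      - (deriv (fun k' => waveAction β g k' ω) k
          + deriv (fun ω' => waveActionFlux β g g' k ω') ω) * c
      + deriv (fun k' => waveActionFlux β g g' k' ω) k
      = ((c - g' k) ^ 2 + g'' * (ω + g k)) / (2 * β) := by
  rw [deriv_waveAction_omega, deriv_waveAction_wavenumber hg, deriv_waveActionFlux_omega,
    deriv_waveActionFlux_wavenumber hg hg']
  ring

theorem modulation_coefficient_eq (hg : HasDerivAt g (g' k) k) (c : ℝ) :
    2 * c * deriv (fun ω' => waveAction β g k ω') ω - deriv (fun k' => waveAction β g k' ω) k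
      - deriv (fun ω' => waveActionFlux β g g' k ω') ω = (c - g' k) / β := by
  rw [deriv_waveAction_omega, deriv_waveAction_wavenumber hg, deriv_waveActionFlux_omega]
  ring

end PlaneWave

section CubicDispersion

variable (α₁ α₂ : ℝ)

def cubicDispersion (k : ℝ) : ℝ := α₁ * k ^ 2 + α₂ * k ^ 3

def cubicDispersionDeriv (k : ℝ) : ℝ := 2 * α₁ * k + 3 * α₂ * k ^ 2

theorem hasDerivAt_cubicDispersion (k : ℝ) :
    HasDerivAt (cubicDispersion α₁ α₂) (cubicDispersionDeriv α₁ α₂ k) k :=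
  (((hasDerivAt_pow 2 k).const_mul α₁).add ((hasDerivAt_pow 3 k).const_mul α₂)).congr_deriv
    (by norm_num [cubicDispersionDeriv]; ring)

theorem hasDerivAt_cubicDispersionDeriv (k : ℝ) :
    HasDerivAt (cubicDispersionDeriv α₁ α₂) (2 * (α₁ + 3 * α₂ * k)) k :=
  (((hasDerivAt_id' k).const_mul (2 * α₁)).add
    ((hasDerivAt_pow 2 k).const_mul (3 * α₂))).congr_deriv (by norm_num; ring)

end CubicDispersion

theorem higher_order_NLS_degenerate_characteristic_general
    (α₁ α₂ β : ℝ) (hβ : β ≠ 0)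
    (𝒜 ℬ : ℝ → ℝ → ℝ)
    (h𝒜 : ∀ k ω, 𝒜 k ω = (ω + α₁ * k ^ 2 + α₂ * k ^ 3) / (2 * β))
    (hℬ : ∀ k ω, ℬ k ω = (α₁ * k + (3 / 2) * α₂ * k ^ 2) * (ω + α₁ * k ^ 2 + α₂ * k ^ 3) / β)
    (k ω h ρ c : ℝ)
    (hh : h = α₁ + 3 * α₂ * k) (hh0 : h ≠ 0)
    (hρ : ρ = (ω + α₁ * k ^ 2 + α₂ * k ^ 3) / β)
    (hdeg : α₂ ^ 2 * ρ + 2 * β⁻¹ * h ^ 3 = 0)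
    (hc : c = 2 * α₁ * k + 3 * α₂ * k ^ 2 + α₂ * β * ρ / h) :
    (deriv (fun ω' => 𝒜 k ω') ω * c ^ 2
      - (deriv (fun k' => 𝒜 k' ω) k + deriv (fun ω' => ℬ k ω') ω) * c
      + deriv (fun k' => ℬ k' ω) k = 0) ∧
    2 * c * deriv (fun ω' => 𝒜 k ω') ω - deriv (fun k' => 𝒜 k' ω) k
      - deriv (fun ω' => ℬ k ω') ω = α₂ * ρ / h := by
  have h𝒜_eq : 𝒜 = waveAction β (cubicDispersion α₁ α₂) := by
    ext k' ω'
    simp only [h𝒜, waveAction, cubicDispersion, add_assoc]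
  have hℬ_eq : ℬ = waveActionFlux β (cubicDispersion α₁ α₂) (cubicDispersionDeriv α₁ α₂) := by
    ext k' ω'
    simp only [hℬ, waveActionFlux, cubicDispersion, cubicDispersionDeriv]
    field_simp
    ring
  have hg := hasDerivAt_cubicDispersion α₁ α₂ k
  have hg' := hasDerivAt_cubicDispersionDeriv α₁ α₂ k
  have hβρ : ω + cubicDispersion α₁ α₂ k = β * ρ := by
    rw [hρ, cubicDispersion]; field_simp; ring
  have hspeed : c - cubicDispersionDeriv α₁ α₂ k = α₂ * β * ρ / h := by
    rw [hc, cubicDispersionDeriv]; ring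
  subst h𝒜_eq hℬ_eq
  refine ⟨?_, ?_⟩
  · have hroot : (α₂ * β * ρ / h) ^ 2 + 2 * h * (β * ρ) = 0 := by
      have hdeg' : α₂ ^ 2 * β * ρ + 2 * h ^ 3 = 0 := by
        field_simp at hdeg; linear_combination hdeg
      field_simp
      linear_combination β * ρ * hdeg'
    rw [characteristic_quadratic_eq hg hg', hspeed, hβρ, ← hh, hroot, zero_div]
  · rw [modulation_coefficient_eq hg, hspeed]
    field_simp

/-- At a local linear degeneracy of the higher-order NLS plane wave
(`α₂²ρ + 2β⁻¹h³ = 0`), the degenerate speed `c = 2α₁k + 3α₂k² + α₂βρ/h` satisfies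
the characteristic equation, and the time-derivative coefficient of the modified KdV
equals `2c ∂_ω𝒜 − ∂_k𝒜 − ∂_ωℬ = α₂ρ/h`. -/
theorem higher_order_NLS_degenerate_characteristic
    (α₁ α₂ β : ℝ) (hβ : β ≠ 0)
    (𝒜 ℬ : ℝ → ℝ → ℝ)
    (h𝒜 : ∀ k ω, 𝒜 k ω = (ω + α₁ * k ^ 2 + α₂ * k ^ 3) / (2 * β))
    (hℬ : ∀ k ω, ℬ k ω = (α₁ * k + (3 / 2) * α₂ * k ^ 2) * (ω + α₁ * k ^ 2 + α₂ * k ^ 3) / β)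
    (k ω h ρ c : ℝ)
    (hh : h = α₁ + 3 * α₂ * k) (hh0 : h ≠ 0)
    (hρ : ρ = (ω + α₁ * k ^ 2 + α₂ * k ^ 3) / β) (hρ0 : 0 < ρ)
    (hdeg : α₂ ^ 2 * ρ + 2 * β⁻¹ * h ^ 3 = 0)
    (hc : c = 2 * α₁ * k + 3 * α₂ * k ^ 2 + α₂ * β * ρ / h) :
    (deriv (fun ω' => 𝒜 k ω') ω * c ^ 2
      - (deriv (fun k' => 𝒜 k' ω) k + deriv (fun ω' => ℬ k ω') ω) * c
      + deriv (fun k' => ℬ k' ω) k = 0) ∧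
    2 * c * deriv (fun ω' => 𝒜 k ω') ω - deriv (fun k' => 𝒜 k' ω) k
      - deriv (fun ω' => ℬ k ω') ω = α₂ * ρ / h :=
  higher_order_NLS_degenerate_characteristic_general α₁ α₂ β hβ 𝒜 ℬ h𝒜 hℬ k ω h ρ c hh hh0 hρ hdeg
    hc
end
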